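/- arXiv:quant-ph/0401026 — 3 statements merged into one kernel-verified Lean document; each statement's English description precedes it below -/
import Mathlib

section
/- Let Φ : M_d(ℂ) → M_{d'}(ℂ) be a completely positive linear map such that every entry of every matrix Φ(E_{jk}) is a nonnegative real number (equivalently, the Choi matrix of Φ has nonnegative real entries). Then Tr Φ(E_{ik})† Φ(E_{jℓ}) ≥ 0 for all indices i, j, k, ℓ, and consequently ν₂(Φ ⊗ Ω) = ν₂(Φ) · ν₂(Ω) for every completely positive map Ω. -/
open scoped Kronecker ComplexOrder
open Matrix

/-- Frobenius (Hilbert–Schmidt) norm ‖A‖₂ = (Tr A†A)^{1/2}. -/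
noncomputable def frob {m n : Type*} [Fintype m] [Fintype n] (A : Matrix m n ℂ) : ℝ :=
  Real.sqrt ((Aᴴ * A).trace.re)

/-- ‖Φ‖_{2→2} = sup_{A ≠ 0} ‖Φ(A)‖₂ / ‖A‖₂. -/
noncomputable def norm22 {m m' : Type*} [Fintype m] [Fintype m']
    (Φ : Matrix m m ℂ →ₗ[ℂ] Matrix m' m' ℂ) : ℝ :=
  sSup {r | ∃ A, A ≠ 0 ∧ r = frob (Φ A) / frob A}

/-- Choi matrix ∑_{j,k} E_{jk} ⊗ Φ(E_{jk}) of a linear map between matrix algebras. -/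
noncomputable def choi {m m' : Type*} [Fintype m] [DecidableEq m] [Fintype m']
    (Φ : Matrix m m ℂ →ₗ[ℂ] Matrix m' m' ℂ) : Matrix (m × m') (m × m') ℂ :=
  ∑ j, ∑ k, (single j k (1 : ℂ)) ⊗ₖ Φ (single j k 1)

/-- A linear map between matrix algebras is completely positive iff its Choi matrix is
positive semidefinite. -/
def IsCPMap {m m' : Type*} [Fintype m] [DecidableEq m] [Fintype m']
    (Φ : Matrix m m ℂ →ₗ[ℂ] Matrix m' m' ℂ) : Prop :=
  (choi Φ).PosSemidef

/-- Schatten p-norm ‖A‖_p = (Tr |A|^p)^{1/p}, computed through the singular values of A,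
i.e. the square roots of the eigenvalues of A†A. -/
noncomputable def schatten {m n : Type*} [Fintype m] [Fintype n] [DecidableEq n]
    (p : ℝ) (A : Matrix m n ℂ) : ℝ :=
  (∑ i, Real.sqrt ((isHermitian_conjTranspose_mul_self A).eigenvalues i) ^ p) ^ (1 / p)

/-- ν₂(Φ) = sup { ‖Φ(ρ)‖₂ : ρ positive semidefinite, Tr ρ = 1 }. -/
noncomputable def nu2 {m m' : Type*} [Fintype m] [Fintype m']
    (Φ : Matrix m m ℂ →ₗ[ℂ] Matrix m' m' ℂ) : ℝ :=
  sSup {r | ∃ ρ : Matrix m m ℂ, ρ.PosSemidef ∧ ρ.trace = 1 ∧ r = frob (Φ ρ)}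

/-- ν_p(Φ) = sup { ‖Φ(ρ)‖_p : ρ positive semidefinite, Tr ρ = 1 }. -/
noncomputable def nup (p : ℝ) {m m' : Type*} [Fintype m] [Fintype m'] [DecidableEq m']
    (Φ : Matrix m m ℂ →ₗ[ℂ] Matrix m' m' ℂ) : ℝ :=
  sSup {r | ∃ ρ : Matrix m m ℂ, ρ.PosSemidef ∧ ρ.trace = 1 ∧ r = schatten p (Φ ρ)}

/-- The Pauli matrices σ₁, σ₂, σ₃ (indexed by `Fin 3`). -/
noncomputable def pauli : Fin 3 → Matrix (Fin 2) (Fin 2) ℂ :=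
  ![!![0, 1; 1, 0], !![0, -Complex.I; Complex.I, 0], !![1, 0; 0, -1]]

/-!
The first claim is immediate: `Tr Φ(E_ik)† Φ(E_jl)` is a sum of products of nonnegative reals.

For the second, product states give `ν₂(Φ) ν₂(Ω) ≤ ν₂(Φ ⊗ Ω)`. Conversely, write a state `ρ` as
`∑ E_ik ⊗ R_ik` with blocks `R_ik`. Complete positivity of `Ω` makes `Ω(R_ik) = D_i† D_k` a Gram
family, so `‖Ω(R_ik)‖₂ ≤ z_i z_k` with `z_i = ‖Ω(R_ii)‖₂^{1/2}`. Expanding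
`‖(Φ ⊗ Ω)(ρ)‖₂² = ∑ Tr(Φ(E_p)† Φ(E_r)) Tr(Ω(R_p)† Ω(R_r))`, where the first factors are
nonnegative, gives `‖(Φ ⊗ Ω)(ρ)‖₂ ≤ ‖Φ(z zᵀ)‖₂ ≤ ν₂(Φ) ∑ z_i² ≤ ν₂(Φ) ν₂(Ω)`.
-/

open scoped InnerProductSpace

section Frobenius

variable {l m n p q : Type*} [Fintype l] [Fintype m] [Fintype n] [Fintype p] [Fintype q]

attribute [local instance] Matrix.frobeniusNormedAddCommGroup

noncomputable def flatten (A : Matrix m n ℂ) : EuclideanSpace ℂ (m × n) :=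
  WithLp.toLp 2 (Function.uncurry A)

lemma inner_flatten (A B : Matrix m n ℂ) : ⟪flatten A, flatten B⟫_ℂ = (Aᴴ * B).trace := by
  simp only [flatten, PiLp.inner_apply, Fintype.sum_prod_type, Matrix.trace, Matrix.diag,
    Matrix.mul_apply, conjTranspose_apply, RCLike.inner_apply, mul_comm]
  exact Finset.sum_comm

lemma frob_eq_norm_flatten (A : Matrix m n ℂ) : frob A = ‖flatten A‖ := by
  rw [frob, ← inner_flatten, inner_self_eq_norm_sq_to_K]
  norm_cast
  exact Real.sqrt_sq (norm_nonneg _)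

lemma frob_eq_frobenius_norm (A : Matrix m n ℂ) : frob A = ‖A‖ := by
  rw [frob_eq_norm_flatten, EuclideanSpace.norm_eq, frobenius_norm_def, Real.sqrt_eq_rpow,
    Fintype.sum_prod_type]
  simp_rw [Real.rpow_two]
  rfl

lemma frob_nonneg (A : Matrix m n ℂ) : 0 ≤ frob A := Real.sqrt_nonneg _

lemma trace_conjTranspose_mul_self_eq (A : Matrix m n ℂ) :
    (Aᴴ * A).trace = ((frob A ^ 2 : ℝ) : ℂ) := by
  rw [← inner_flatten, inner_self_eq_norm_sq_to_K, frob_eq_norm_flatten]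
  push_cast
  rfl

lemma frob_sq (A : Matrix m n ℂ) : frob A ^ 2 = (Aᴴ * A).trace.re := by
  rw [trace_conjTranspose_mul_self_eq, Complex.ofReal_re]

lemma norm_trace_conjTranspose_mul_le (A B : Matrix m n ℂ) :
    ‖(Aᴴ * B).trace‖ ≤ frob A * frob B := by
  rw [← inner_flatten, frob_eq_norm_flatten, frob_eq_norm_flatten]
  exact norm_inner_le_norm _ _

lemma frob_smul (c : ℂ) (A : Matrix m n ℂ) : frob (c • A) = ‖c‖ * frob A := by
  simp only [frob_eq_norm_flatten]
  exact norm_smul c (flatten A)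

lemma norm_apply_le_frob (A : Matrix m n ℂ) (i : m) (j : n) : ‖A i j‖ ≤ frob A := by
  rw [frob_eq_norm_flatten]
  exact PiLp.norm_apply_le (flatten A) (i, j)

lemma frob_sum_le {ι : Type*} (s : Finset ι) (A : ι → Matrix m n ℂ) :
    frob (∑ i ∈ s, A i) ≤ ∑ i ∈ s, frob (A i) := by
  simpa only [frob_eq_frobenius_norm] using norm_sum_le s A

lemma frob_mul_le (A : Matrix l m ℂ) (B : Matrix m n ℂ) : frob (A * B) ≤ frob A * frob B := by
  simpa only [frob_eq_frobenius_norm] using frobenius_norm_mul A B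

lemma frob_conjTranspose (A : Matrix m n ℂ) : frob Aᴴ = frob A := by
  simpa only [frob_eq_frobenius_norm] using frobenius_norm_conjTranspose A

lemma frob_kronecker (A : Matrix m n ℂ) (B : Matrix p q ℂ) :
    frob (A ⊗ₖ B) = frob A * frob B := by
  rw [frob, conjTranspose_kronecker, ← mul_kronecker_mul, trace_kronecker,
    trace_conjTranspose_mul_self_eq, trace_conjTranspose_mul_self_eq, ← Complex.ofReal_mul,
    Complex.ofReal_re, ← mul_pow, Real.sqrt_sq (mul_nonneg (frob_nonneg _) (frob_nonneg _))]

lemma frob_mul_conjTranspose_self (X : Matrix p m ℂ) : frob (X * Xᴴ) = frob (Xᴴ * X) := by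
  simp only [frob, conjTranspose_mul, conjTranspose_conjTranspose, Matrix.mul_assoc]
  rw [trace_mul_comm]
  simp only [Matrix.mul_assoc]

lemma frob_conjTranspose_mul_sq_le (X : Matrix p m ℂ) (Y : Matrix p n ℂ) :
    frob (Xᴴ * Y) ^ 2 ≤ frob (Xᴴ * X) * frob (Yᴴ * Y) := by
  have hcycle : (Xᴴ * Y)ᴴ * (Xᴴ * Y) = Yᴴ * (X * Xᴴ) * Y := by
    simp only [conjTranspose_mul, conjTranspose_conjTranspose, Matrix.mul_assoc]
  rw [frob_sq, hcycle, trace_mul_cycle, ← frob_mul_conjTranspose_self X,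
    ← frob_mul_conjTranspose_self Y]
  calc (Y * Yᴴ * (X * Xᴴ)).trace.re ≤ ‖((X * Xᴴ)ᴴ * (Y * Yᴴ)).trace‖ := by
        rw [(isHermitian_mul_conjTranspose_self X).eq, trace_mul_comm]
        exact Complex.re_le_norm _
    _ ≤ frob (X * Xᴴ) * frob (Y * Yᴴ) := norm_trace_conjTranspose_mul_le _ _

lemma frob_le_trace_of_posSemidef {ρ : Matrix m m ℂ} (hρ : ρ.PosSemidef) :
    frob ρ ≤ ρ.trace.re := by
  classical
  open scoped MatrixOrder in
  obtain ⟨B, rfl⟩ := CStarAlgebra.nonneg_iff_eq_star_mul_self.mp hρ.nonneg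
  calc frob (star B * B) ≤ frob Bᴴ * frob B := frob_mul_le _ _
    _ = (Bᴴ * B).trace.re := by rw [frob_conjTranspose, ← sq, frob_sq]

lemma frob_sum_sq {ι : Type*} [Fintype ι] (M : ι → Matrix m n ℂ) :
    frob (∑ i, M i) ^ 2 = ∑ i, ∑ j, ((M i)ᴴ * M j).trace.re := by
  simp only [frob_sq, conjTranspose_sum, Matrix.sum_mul, Matrix.mul_sum, trace_sum,
    Complex.re_sum]
  exact Finset.sum_comm

end Frobenius

section MapExpansion

variable {m m' : Type*} [Fintype m] [DecidableEq m]

lemma map_eq_sum_smul_single (Θ : Matrix m m ℂ →ₗ[ℂ] Matrix m' m' ℂ) (A : Matrix m m ℂ) :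
    Θ A = ∑ i, ∑ j, A i j • Θ (single i j 1) := by
  conv_lhs => rw [matrix_eq_sum_single A]
  simp only [map_sum]
  refine Finset.sum_congr rfl fun i _ => Finset.sum_congr rfl fun j _ => ?_
  rw [← map_smul, smul_single, smul_eq_mul, mul_one]

variable [Fintype m']

lemma choi_apply (Θ : Matrix m m ℂ →ₗ[ℂ] Matrix m' m' ℂ) (a c : m) (b b' : m') :
    choi Θ (a, b) (c, b') = Θ (single a c 1) b b' := by
  simp [choi, Matrix.sum_apply, kroneckerMap_apply, single_apply, ite_and]

lemma map_apply_eq_sum_choi (Θ : Matrix m m ℂ →ₗ[ℂ] Matrix m' m' ℂ) (A : Matrix m m ℂ)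
    (b b' : m') : Θ A b b' = ∑ a, ∑ c, A a c * choi Θ (a, b) (c, b') := by
  simp [map_eq_sum_smul_single Θ A, Matrix.sum_apply, choi_apply]

end MapExpansion

section Nu2

abbrev DensityMatrix (m : Type*) [Fintype m] := {ρ : Matrix m m ℂ // ρ.PosSemidef ∧ ρ.trace = 1}

variable {m m' : Type*} [Fintype m] [Fintype m'] (Θ : Matrix m m ℂ →ₗ[ℂ] Matrix m' m' ℂ)

lemma nu2_eq_iSup : nu2 Θ = ⨆ ρ : DensityMatrix m, frob (Θ ρ) := by
  rw [nu2, iSup]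
  congr 1
  ext r
  simp [eq_comm, and_assoc]

lemma exists_frob_map_le : ∃ C, ∀ A, frob (Θ A) ≤ C * frob A := by
  classical
  refine ⟨∑ i, ∑ j, frob (Θ (single i j 1)), fun A => ?_⟩
  rw [map_eq_sum_smul_single Θ A, Finset.sum_mul]
  refine (frob_sum_le _ _).trans (Finset.sum_le_sum fun i _ => ?_)
  rw [Finset.sum_mul]
  refine (frob_sum_le _ _).trans (Finset.sum_le_sum fun j _ => ?_)
  rw [frob_smul, mul_comm]
  exact mul_le_mul_of_nonneg_left (norm_apply_le_frob A i j) (frob_nonneg _)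

lemma bddAbove_range_frob_map : BddAbove (Set.range fun ρ : DensityMatrix m => frob (Θ ρ)) := by
  obtain ⟨C, hC⟩ := exists_frob_map_le Θ
  refine ⟨max C 0, Set.forall_mem_range.mpr fun ⟨ρ, hρ, htr⟩ => ?_⟩
  have hρ1 : frob ρ ≤ 1 := by simpa [htr] using frob_le_trace_of_posSemidef hρ
  calc frob (Θ ρ) ≤ C * frob ρ := hC ρ
    _ ≤ max C 0 * frob ρ := mul_le_mul_of_nonneg_right (le_max_left _ _) (frob_nonneg _)
    _ ≤ max C 0 := mul_le_of_le_one_right (le_max_right _ _) hρ1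

lemma nu2_nonneg : 0 ≤ nu2 Θ := by
  rw [nu2_eq_iSup]
  exact Real.iSup_nonneg fun _ => frob_nonneg _

lemma frob_map_le_nu2 {ρ : Matrix m m ℂ} (hρ : ρ.PosSemidef) (htr : ρ.trace = 1) :
    frob (Θ ρ) ≤ nu2 Θ := by
  rw [nu2_eq_iSup]
  exact le_ciSup (f := fun ρ : DensityMatrix m => frob (Θ ρ)) (bddAbove_range_frob_map Θ)
    ⟨ρ, hρ, htr⟩

lemma frob_map_le_nu2_mul_trace {τ : Matrix m m ℂ} (hτ : τ.PosSemidef) :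
    frob (Θ τ) ≤ nu2 Θ * τ.trace.re := by
  have htrace : τ.trace = (τ.trace.re : ℂ) :=
    Complex.ext rfl (Complex.le_def.mp hτ.trace_nonneg).2.symm
  rcases (Complex.le_def.mp hτ.trace_nonneg).1.eq_or_lt with h0 | hpos
  · have : τ = 0 := hτ.trace_eq_zero_iff.mp (by rw [htrace, ← h0]; simp)
    simp [this, frob]
  set t := τ.trace.re
  have hstate : frob (Θ ((t⁻¹ : ℂ) • τ)) ≤ nu2 Θ :=
    frob_map_le_nu2 Θ
      (hτ.smul (by rw [← Complex.ofReal_inv]; exact Complex.zero_le_real.mpr (inv_pos.mpr hpos).le))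
      (by rw [trace_smul, htrace, smul_eq_mul, ← Complex.ofReal_inv, ← Complex.ofReal_mul,
        inv_mul_cancel₀ hpos.ne', Complex.ofReal_one])
  rw [map_smul, frob_smul, ← Complex.ofReal_inv, Complex.norm_real, Real.norm_eq_abs,
    abs_of_pos (inv_pos.mpr hpos), inv_mul_le_iff₀ hpos] at hstate
  linarith

end Nu2

lemma trace_conjTranspose_mul_nonneg {m n : Type*} [Fintype m] [Fintype n] {A B : Matrix m n ℂ}
    (hA : ∀ i j, 0 ≤ A i j) (hB : ∀ i j, 0 ≤ B i j) : 0 ≤ (Aᴴ * B).trace := by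
  simp only [Matrix.trace, Matrix.diag, Matrix.mul_apply, conjTranspose_apply]
  exact Finset.sum_nonneg fun _ _ => Finset.sum_nonneg fun _ _ =>
    mul_nonneg (star_nonneg_iff.mpr (hA _ _)) (hB _ _)

lemma IsCPMap.exists_map_submatrix_eq_gram {ι κ e e' : Type*} [Fintype ι] [Fintype κ]
    [Fintype e] [DecidableEq e] [Fintype e'] {Ω : Matrix e e ℂ →ₗ[ℂ] Matrix e' e' ℂ}
    (hΩ : IsCPMap Ω) (B : Matrix κ (ι × e) ℂ) :
    ∃ D : ι → Matrix ((e × e') × κ) e' ℂ,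
      ∀ i k, Ω ((Bᴴ * B).submatrix (Prod.mk i) (Prod.mk k)) = (D i)ᴴ * D k := by
  classical
  open scoped MatrixOrder in
  obtain ⟨N, hN⟩ := CStarAlgebra.nonneg_iff_eq_star_mul_self.mp hΩ.nonneg
  refine ⟨fun i => of fun st b => ∑ a, B st.2 (i, a) * N st.1 (a, b), fun i k => ?_⟩
  ext b b'
  rw [map_apply_eq_sum_choi, hN]
  simp only [submatrix_apply, Matrix.mul_apply, star_eq_conjTranspose, conjTranspose_apply,
    of_apply, star_sum, star_mul', Finset.sum_mul, Finset.mul_sum]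
  rw [Finset.sum_comm]
  -- both sides sum `conj (B t (i, a)) * B t (k, c) * conj (N s (a, b)) * N s (c, b')` over
  -- `a, c, s, t`, only in different orders
  refine (Finset.sum_congr rfl fun c _ => (Finset.sum_congr rfl fun a _ =>
    (Fintype.sum_prod_type' _).symm).trans Finset.sum_comm).trans
    (Finset.sum_comm.trans (Finset.sum_congr rfl fun j _ => Finset.sum_congr rfl fun c _ =>
      Finset.sum_congr rfl fun a _ => by ring))

lemma frob_sum_kronecker_le {ι m n p q : Type*} [Fintype ι] [Fintype m] [Fintype n] [Fintype p]
    [Fintype q] (A : ι → Matrix m n ℂ) (C : ι → Matrix p q ℂ) (w : ι → ℝ)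
    (hA : ∀ i j, 0 ≤ ((A i)ᴴ * A j).trace) (hC : ∀ i, frob (C i) ≤ w i) :
    frob (∑ i, A i ⊗ₖ C i) ≤ frob (∑ i, (w i : ℂ) • A i) := by
  have hw : ∀ i, 0 ≤ w i := fun i => (frob_nonneg _).trans (hC i)
  refine (pow_le_pow_iff_left₀ (frob_nonneg _) (frob_nonneg _) two_ne_zero).mp ?_
  rw [frob_sum_sq, frob_sum_sq]
  refine Finset.sum_le_sum fun i _ => Finset.sum_le_sum fun j _ => ?_
  obtain ⟨hre, him⟩ := Complex.nonneg_iff.mp (hA i j)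
  have hCij : ((C i)ᴴ * C j).trace.re ≤ w i * w j :=
    calc ((C i)ᴴ * C j).trace.re ≤ ‖((C i)ᴴ * C j).trace‖ := Complex.re_le_norm _
      _ ≤ frob (C i) * frob (C j) := norm_trace_conjTranspose_mul_le _ _
      _ ≤ w i * w j := mul_le_mul (hC i) (hC j) (frob_nonneg _) (hw i)
  rw [conjTranspose_kronecker, ← mul_kronecker_mul, trace_kronecker, Complex.mul_re, ← him,
    zero_mul, sub_zero, conjTranspose_smul, Matrix.smul_mul, Matrix.mul_smul, trace_smul,
    trace_smul, smul_eq_mul, smul_eq_mul, Complex.star_def, Complex.conj_ofReal,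
    Complex.re_ofReal_mul, Complex.re_ofReal_mul]
  linarith [mul_le_mul_of_nonneg_left hCij hre]

lemma eq_sum_single_kronecker_submatrix {m n : Type*} [Fintype m] [DecidableEq m]
    (ρ : Matrix (m × n) (m × n) ℂ) :
    ρ = ∑ i, ∑ k, single i k 1 ⊗ₖ ρ.submatrix (Prod.mk i) (Prod.mk k) := by
  ext ⟨i, a⟩ ⟨k, c⟩
  simp [Matrix.sum_apply, kroneckerMap_apply, single_apply, ite_and]

section Multiplicativity

variable {d d' e e' : Type*} [Fintype d] [Fintype d'] [Fintype e] [Fintype e']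
  {Φ : Matrix d d ℂ →ₗ[ℂ] Matrix d' d' ℂ} {Ω : Matrix e e ℂ →ₗ[ℂ] Matrix e' e' ℂ}
  {Ψ : Matrix (d × e) (d × e) ℂ →ₗ[ℂ] Matrix (d' × e') (d' × e') ℂ}

lemma nu2_mul_nu2_le (hΨ : ∀ X B, Ψ (X ⊗ₖ B) = Φ X ⊗ₖ Ω B) : nu2 Φ * nu2 Ω ≤ nu2 Ψ := by
  rw [nu2_eq_iSup Φ, Real.iSup_mul_of_nonneg (nu2_nonneg Ω)]
  refine Real.iSup_le (fun ρ₁ => ?_) (nu2_nonneg Ψ)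
  rw [nu2_eq_iSup Ω, Real.mul_iSup_of_nonneg (frob_nonneg _)]
  refine Real.iSup_le (fun ρ₂ => ?_) (nu2_nonneg Ψ)
  rw [← frob_kronecker, ← hΨ]
  exact frob_map_le_nu2 Ψ (ρ₁.2.1.kronecker ρ₂.2.1)
    (by rw [trace_kronecker, ρ₁.2.2, ρ₂.2.2, one_mul])

variable [DecidableEq d] [DecidableEq e]

lemma frob_map_le_nu2_mul_nu2
    (hΦ : ∀ i j k l, 0 ≤ ((Φ (single i k 1))ᴴ * Φ (single j l 1)).trace) (hΩ : IsCPMap Ω)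
    (hΨ : ∀ X B, Ψ (X ⊗ₖ B) = Φ X ⊗ₖ Ω B) {ρ : Matrix (d × e) (d × e) ℂ}
    (hρ : ρ.PosSemidef) (htr : ρ.trace = 1) : frob (Ψ ρ) ≤ nu2 Φ * nu2 Ω := by
  set R := fun i k => ρ.submatrix (Prod.mk i) (Prod.mk k)
  set z : d → ℝ := fun i => √(frob (Ω (R i i)))
  have hRz : ∀ i k, frob (Ω (R i k)) ≤ z i * z k := by
    open scoped MatrixOrder in
    obtain ⟨B, hB⟩ := CStarAlgebra.nonneg_iff_eq_star_mul_self.mp hρ.nonneg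
    obtain ⟨D, hD⟩ := hΩ.exists_map_submatrix_eq_gram B
    intro i k
    simp only [z, R, hB, star_eq_conjTranspose, hD, ← Real.sqrt_mul (frob_nonneg _)]
    exact Real.le_sqrt_of_sq_le (frob_conjTranspose_mul_sq_le _ _)
  set σ : Matrix d d ℂ := vecMulVec (fun i => (z i : ℂ)) (star fun i => (z i : ℂ))
  have hΨρ : Ψ ρ = ∑ p : d × d, Φ (single p.1 p.2 1) ⊗ₖ Ω (R p.1 p.2) := by
    conv_lhs => rw [eq_sum_single_kronecker_submatrix ρ]
    simp only [map_sum, hΨ, R, Fintype.sum_prod_type]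
  have hΦσ : Φ σ = ∑ p : d × d, ((z p.1 * z p.2 : ℝ) : ℂ) • Φ (single p.1 p.2 1) := by
    simp [map_eq_sum_smul_single Φ σ, σ, vecMulVec_apply, Fintype.sum_prod_type]
  have htrσ : σ.trace.re = ∑ i, frob (Ω (R i i)) := by
    simp [σ, Matrix.trace, vecMulVec_apply, z, ← Complex.ofReal_mul,
      Real.mul_self_sqrt (frob_nonneg _)]
  have hΩR : ∑ i, frob (Ω (R i i)) ≤ nu2 Ω :=
    calc ∑ i, frob (Ω (R i i)) ≤ ∑ i, nu2 Ω * (R i i).trace.re :=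
          Finset.sum_le_sum fun i _ => frob_map_le_nu2_mul_trace Ω (hρ.submatrix _)
      _ = nu2 Ω * ρ.trace.re := by
          rw [← Finset.mul_sum, ← Complex.re_sum, Matrix.trace, Fintype.sum_prod_type]
          rfl
      _ = nu2 Ω := by rw [htr, Complex.one_re, mul_one]
  calc frob (Ψ ρ) ≤ frob (Φ σ) := by
        rw [hΨρ, hΦσ]
        exact frob_sum_kronecker_le _ _ _ (fun p r => hΦ p.1 r.1 p.2 r.2) fun p => hRz p.1 p.2
    _ ≤ nu2 Φ * σ.trace.re := frob_map_le_nu2_mul_trace Φ (posSemidef_vecMulVec_self_star _)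
    _ ≤ nu2 Φ * nu2 Ω := by
        rw [htrσ]
        exact mul_le_mul_of_nonneg_left hΩR (nu2_nonneg Φ)

lemma nu2_eq_mul_nu2
    (hΦ : ∀ i j k l, 0 ≤ ((Φ (single i k 1))ᴴ * Φ (single j l 1)).trace) (hΩ : IsCPMap Ω)
    (hΨ : ∀ X B, Ψ (X ⊗ₖ B) = Φ X ⊗ₖ Ω B) : nu2 Ψ = nu2 Φ * nu2 Ω := by
  refine le_antisymm ?_ (nu2_mul_nu2_le hΨ)
  rw [nu2_eq_iSup Ψ]
  exact Real.iSup_le (fun ρ => frob_map_le_nu2_mul_nu2 hΦ hΩ hΨ ρ.2.1 ρ.2.2)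
    (mul_nonneg (nu2_nonneg Φ) (nu2_nonneg Ω))

end Multiplicativity

theorem stmt8_general {d d' : ℕ}
    (Φ : Matrix (Fin d) (Fin d) ℂ →ₗ[ℂ] Matrix (Fin d') (Fin d') ℂ)
    (hentries : ∀ (j k : Fin d) (j' k' : Fin d'), 0 ≤ Φ (single j k 1) j' k') :
    (∀ i j k l : Fin d,
      0 ≤ ((Φ (single i k 1))ᴴ * Φ (single j l 1)).trace) ∧
    ∀ {e e' : ℕ} (Ω : Matrix (Fin e) (Fin e) ℂ →ₗ[ℂ] Matrix (Fin e') (Fin e') ℂ),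
      IsCPMap Ω →
      ∀ Ψ : Matrix (Fin d × Fin e) (Fin d × Fin e) ℂ →ₗ[ℂ]
          Matrix (Fin d' × Fin e') (Fin d' × Fin e') ℂ,
        (∀ (X : Matrix (Fin d) (Fin d) ℂ) (B : Matrix (Fin e) (Fin e) ℂ),
          Ψ (X ⊗ₖ B) = Φ X ⊗ₖ Ω B) →
        nu2 Ψ = nu2 Φ * nu2 Ω := by
  have hgram : ∀ i j k l : Fin d, 0 ≤ ((Φ (single i k 1))ᴴ * Φ (single j l 1)).trace :=
    fun i j k l => trace_conjTranspose_mul_nonneg (hentries i k) (hentries j l)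
  exact ⟨hgram, fun Ω hΩ Ψ hΨ => nu2_eq_mul_nu2 hgram hΩ hΨ⟩

/-- If Φ is completely positive and every entry of every Φ(E_{jk}) is a nonnegative real
number, then Tr Φ(E_{ik})† Φ(E_{jℓ}) ≥ 0 for all indices, and consequently
ν₂(Φ ⊗ Ω) = ν₂(Φ) ν₂(Ω) for every completely positive Ω. -/
theorem stmt8 {d d' : ℕ}
    (Φ : Matrix (Fin d) (Fin d) ℂ →ₗ[ℂ] Matrix (Fin d') (Fin d') ℂ)
    (hΦ : IsCPMap Φ)
    (hentries : ∀ (j k : Fin d) (j' k' : Fin d'), 0 ≤ Φ (single j k 1) j' k') :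
    (∀ i j k l : Fin d,
      0 ≤ ((Φ (single i k 1))ᴴ * Φ (single j l 1)).trace) ∧
    ∀ {e e' : ℕ} (Ω : Matrix (Fin e) (Fin e) ℂ →ₗ[ℂ] Matrix (Fin e') (Fin e') ℂ),
      IsCPMap Ω →
      ∀ Ψ : Matrix (Fin d × Fin e) (Fin d × Fin e) ℂ →ₗ[ℂ]
          Matrix (Fin d' × Fin e') (Fin d' × Fin e') ℂ,
        (∀ (X : Matrix (Fin d) (Fin d) ℂ) (B : Matrix (Fin e) (Fin e) ℂ),
          Ψ (X ⊗ₖ B) = Φ X ⊗ₖ Ω B) →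
        nu2 Ψ = nu2 Φ * nu2 Ω :=
  stmt8_general Φ hentries
end

section
/- Let w, u ∈ ℝ³ and let A = I + ∑_k (w_k + i u_k) σ_k ∈ M₂(ℂ). Then (Tr|A|)² ≥ 4·max(|w|², 1 + |u|²). -/
open scoped Kronecker ComplexOrder
open Matrix

/-!
For a `2 × 2` matrix with singular values `s₁, s₂` one has `s₁² + s₂² = Tr A†A` and
`s₁ s₂ = |det A|`, so `(Tr|A|)² = Tr A†A + 2 |det A|`. For `A = I + z·σ` with `z = w + i u`,
the Pauli relations give `Tr A†A = 2 (1 + |w|² + |u|²)` and `det A = 1 - z·z`, whose real part is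
`1 + |u|² - |w|²`. Bounding `|det A|` below by `|Re det A|` leaves `2 (a + b) + 2 |a - b| = 4 max a b`
with `a = |w|²`, `b = 1 + |u|²`.
-/

theorem re_trace_conjTranspose_mul_self {m n : Type*} [Fintype m] [Fintype n]
    (A : Matrix m n ℂ) : (Aᴴ * A).trace.re = ∑ i, ∑ j, Complex.normSq (A i j) := by
  simp only [trace, diag_apply, mul_apply, conjTranspose_apply, Complex.re_sum, RCLike.star_def,
    Complex.conj_mul', ← Complex.ofReal_pow, Complex.ofReal_re, Complex.sq_norm]
  exact Finset.sum_comm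

theorem sq_schatten_one_fin_two (A : Matrix (Fin 2) (Fin 2) ℂ) :
    schatten 1 A ^ 2 = (Aᴴ * A).trace.re + 2 * ‖A.det‖ := by
  have hA := isHermitian_conjTranspose_mul_self A
  have hnonneg := (posSemidef_conjTranspose_mul_self A).eigenvalues_nonneg
  set e := hA.eigenvalues
  have htrace : (Aᴴ * A).trace.re = e 0 + e 1 := by
    simp [hA.trace_eq_sum_eigenvalues, Fin.sum_univ_two, e]
  have hdet : e 0 * e 1 = ‖A.det‖ ^ 2 := by
    have h := hA.det_eq_prod_eigenvalues
    rw [det_mul, det_conjTranspose, RCLike.star_def, Complex.conj_mul', Fin.prod_univ_two] at h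
    exact Complex.ofReal_injective (by push_cast; exact h.symm)
  have hschatten : schatten 1 A = √(e 0) + √(e 1) := by
    simp [schatten, Fin.sum_univ_two, e]
  rw [hschatten, add_sq, Real.sq_sqrt (hnonneg 0), Real.sq_sqrt (hnonneg 1), mul_assoc,
    ← Real.sqrt_mul (hnonneg 0), hdet, Real.sqrt_sq (norm_nonneg _), htrace]
  ring

theorem one_add_pauli_eq (z : Fin 3 → ℂ) :
    1 + ∑ k, z k • pauli k =
      !![1 + z 2, z 0 - Complex.I * z 1; z 0 + Complex.I * z 1, 1 - z 2] := by
  ext i j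
  fin_cases i <;> fin_cases j <;> simp [pauli, Fin.sum_univ_three] <;> ring

theorem det_one_add_pauli (z : Fin 3 → ℂ) :
    (1 + ∑ k, z k • pauli k).det = 1 - ∑ k, z k ^ 2 := by
  rw [one_add_pauli_eq, det_fin_two_of, Fin.sum_univ_three]
  linear_combination (z 1) ^ 2 * Complex.I_sq

theorem re_trace_conjTranspose_mul_self_one_add_pauli (z : Fin 3 → ℂ) :
    ((1 + ∑ k, z k • pauli k)ᴴ * (1 + ∑ k, z k • pauli k)).trace.re =
      2 * (1 + ∑ k, Complex.normSq (z k)) := by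
  rw [re_trace_conjTranspose_mul_self, one_add_pauli_eq]
  simp only [Fin.sum_univ_two, Fin.sum_univ_three, of_apply, cons_val', cons_val_fin_one,
    cons_val_zero, cons_val_one, Complex.normSq_add, Complex.normSq_sub, Complex.normSq_mul,
    Complex.normSq_I, Complex.normSq_one]
  ring

/-- For A = I + ∑_k (w_k + i u_k)σ_k one has (Tr|A|)² ≥ 4 · max(|w|², 1 + |u|²). -/
theorem stmt15 (w u : Fin 3 → ℝ) :
    4 * max (∑ k, w k ^ 2) (1 + ∑ k, u k ^ 2) ≤
      schatten 1 (1 + ∑ k, ((w k : ℂ) + Complex.I * (u k : ℂ)) • pauli k) ^ 2 := by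
  set z : Fin 3 → ℂ := fun k ↦ (w k : ℂ) + Complex.I * (u k : ℂ)
  have hnormSq (k : Fin 3) : Complex.normSq (z k) = w k ^ 2 + u k ^ 2 := by
    simp only [z, mul_comm Complex.I, Complex.normSq_add_mul_I]
  have hre (k : Fin 3) : (z k ^ 2).re = w k ^ 2 - u k ^ 2 := by
    simp [z, sq]
  have hdet : |1 + ∑ k, u k ^ 2 - ∑ k, w k ^ 2| ≤ ‖(1 + ∑ k, z k • pauli k).det‖ := by
    convert Complex.abs_re_le_norm _ using 2
    rw [det_one_add_pauli, Complex.sub_re, Complex.one_re, Complex.re_sum]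
    simp only [hre, Finset.sum_sub_distrib]
    ring
  have hmax := two_nsmul_sup_eq_add_add_abs_sub (∑ k, w k ^ 2) (1 + ∑ k, u k ^ 2)
  change _ ≤ schatten 1 (1 + ∑ k, z k • pauli k) ^ 2
  rw [sq_schatten_one_fin_two, re_trace_conjTranspose_mul_self_one_add_pauli]
  simp only [hnormSq, Finset.sum_add_distrib, two_nsmul] at hmax ⊢
  linarith
end

section
/- Let Λ : M_d(ℂ) → M_d(ℂ) be a completely positive linear map satisfying Tr Λ(A)† Λ(B) = Tr A† B for all A, B ∈ M_d(ℂ) (i.e. Λ is a unitary operator on M_d(ℂ) with the Hilbert–Schmidt inner product). Then there exists a unitary matrix U ∈ M_d(ℂ) such that Λ(A) = U† A U for all A. -/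
open scoped Kronecker ComplexOrder
open Matrix

/-
Write `Λ` in Kraus form `Λ(A) = ∑ᵢ Wᵢ A Wᵢᴴ`, reading the `Wᵢ` off a factorisation `Bᴴ B` of the
Choi matrix. Preservation of the Hilbert–Schmidt inner product says `Λ* ∘ Λ = id`, and `Λ* ∘ Λ`
has the Kraus operators `Wᵢᴴ Wⱼ`; since the Choi matrix of the identity has rank one, all of them
are scalars. Hence every `Wᵢ` is a multiple `μᵢ V` of one unitary `V`, so
`Λ(A) = (∑ᵢ |μᵢ|²) V A Vᴴ`, and the isometry property forces `∑ᵢ |μᵢ|² = 1`.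
-/

section Kraus

variable {m m' : Type*} [Fintype m] [DecidableEq m] [Fintype m']

lemma choi_apply_s18 (Φ : Matrix m m ℂ →ₗ[ℂ] Matrix m' m' ℂ) (j k : m) (r s : m') :
    choi Φ (j, r) (k, s) = Φ (single j k 1) r s := by
  simp [choi, Matrix.sum_apply, kroneckerMap_apply, single, ite_and, Finset.sum_ite_eq']

theorem IsCPMap.exists_kraus {Φ : Matrix m m ℂ →ₗ[ℂ] Matrix m' m' ℂ} (hΦ : IsCPMap Φ) :
    ∃ W : m × m' → Matrix m' m ℂ, ∀ A, Φ A = ∑ i, W i * A * (W i)ᴴ := by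
  classical
  obtain ⟨B, hB⟩ : ∃ B, choi Φ = star B * B := by
    open scoped MatrixOrder in
    exact CStarAlgebra.nonneg_iff_eq_star_mul_self.mp hΦ.nonneg
  refine ⟨fun i => of fun r j => star (B i (j, r)), fun A => ?_⟩
  induction A using Matrix.induction_on' with
  | h_zero => simp
  | h_add A A' hA hA' =>
    simp only [map_add, hA, hA', Matrix.mul_add, Matrix.add_mul, Finset.sum_add_distrib]
  | h_std_basis j k a =>
    rw [← mul_one a, ← smul_eq_mul, ← smul_single, map_smul]
    simp only [Matrix.mul_smul, Matrix.smul_mul, ← Finset.smul_sum]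
    congr 1
    ext r s
    rw [← choi_apply_s18, hB]
    simp [Matrix.mul_apply, Matrix.sum_apply, single, ite_and, Finset.sum_ite_eq]

end Kraus

section Isometry

variable {ι m m' : Type*} [Fintype ι] [Fintype m] [Fintype m']

lemma trace_conjTranspose_kraus_mul_kraus (W : ι → Matrix m' m ℂ) (A B : Matrix m m ℂ) :
    ((∑ i, W i * A * (W i)ᴴ)ᴴ * ∑ i, W i * B * (W i)ᴴ).trace =
      (Aᴴ * ∑ x : ι × ι, ((W x.1)ᴴ * W x.2) * B * ((W x.1)ᴴ * W x.2)ᴴ).trace := by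
  simp only [conjTranspose_sum, Finset.sum_mul, Finset.mul_sum, trace_sum,
    Fintype.sum_prod_type]
  rw [Finset.sum_comm]
  refine Finset.sum_congr rfl fun i _ => Finset.sum_congr rfl fun j _ => ?_
  simp only [conjTranspose_mul, conjTranspose_conjTranspose, Matrix.mul_assoc]
  rw [trace_mul_comm]
  simp only [Matrix.mul_assoc]

lemma sum_kraus_adjoint_comp_kraus_eq_self (W : ι → Matrix m' m ℂ)
    (hiso : ∀ A B : Matrix m m ℂ,
      ((∑ i, W i * A * (W i)ᴴ)ᴴ * ∑ i, W i * B * (W i)ᴴ).trace = (Aᴴ * B).trace)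
    (B : Matrix m m ℂ) :
    ∑ x : ι × ι, ((W x.1)ᴴ * W x.2) * B * ((W x.1)ᴴ * W x.2)ᴴ = B :=
  ext_iff_trace_mul_left.mpr fun X => by
    simpa only [conjTranspose_conjTranspose, trace_conjTranspose_kraus_mul_kraus] using
      hiso Xᴴ B

end Isometry

section Scalar

variable {ι n : Type*} [Fintype ι] [Fintype n] [DecidableEq n]

lemma mul_single_one_mul_conjTranspose_apply (N : Matrix n n ℂ) (p q p' q' : n) :
    (N * single p' q' (1 : ℂ) * Nᴴ) p q = N p p' * star (N q q') := by
  simp [Matrix.mul_apply, single, ite_and, Finset.sum_ite_eq]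

theorem exists_eq_smul_one_of_sum_conj_eq_self {N : ι → Matrix n n ℂ}
    (h : ∀ B, ∑ x, N x * B * (N x)ᴴ = B) (x : ι) : ∃ c : ℂ, N x = c • 1 := by
  have entries (p q p' q' : n) :
      ∑ x, N x p p' * star (N x q q') = if p = p' ∧ q = q' then 1 else 0 := by
    have := congrFun₂ (h (single p' q' 1)) p q
    simp only [Matrix.sum_apply, mul_single_one_mul_conjTranspose_apply] at this
    rw [this, single_apply]
    simp only [eq_comm]
  have offDiag {p p'} (hp : p ≠ p') : N x p p' = 0 := by
    have := entries p p p' p'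
    rw [if_neg (by tauto)] at this
    exact congrFun (dotProduct_self_star_eq_zero.mp this) x
  have diag (p q : n) : N x p p = N x q q := by
    -- `∑ |N pp - N qq|² = 1 - 1 - 1 + 1`
    have key : (fun y => N y p p - N y q q) ⬝ᵥ star (fun y => N y p p - N y q q) = 0 := by
      simp only [dotProduct, Pi.star_apply, star_sub, sub_mul, mul_sub, Finset.sum_sub_distrib,
        entries, and_self, if_true]
      ring
    exact sub_eq_zero.mp (congrFun (dotProduct_self_star_eq_zero.mp key) x)
  rcases isEmpty_or_nonempty n with _ | ⟨⟨p₀⟩⟩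
  · exact ⟨0, Subsingleton.elim _ _⟩
  refine ⟨N x p₀ p₀, ext fun p q => ?_⟩
  by_cases hpq : p = q
  · subst hpq; simp [diag p p₀]
  · simp [offDiag hpq, hpq]

end Scalar

lemma sum_smul_mul_mul_smul_conjTranspose {ι m n : Type*} [Fintype ι] [Fintype n] (μ : ι → ℂ)
    (V : Matrix m n ℂ) (A : Matrix n n ℂ) :
    ∑ i, (μ i • V) * A * (μ i • V)ᴴ = ((∑ i, Complex.normSq (μ i) : ℝ) : ℂ) • (V * A * Vᴴ) := by
  rw [Complex.ofReal_sum, Finset.sum_smul]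
  refine Finset.sum_congr rfl fun i _ => ?_
  simp only [conjTranspose_smul, Matrix.smul_mul, Matrix.mul_smul, smul_smul]
  rw [Complex.star_def, mul_comm, Complex.mul_conj]

section Unitary

variable {n : Type*} [Fintype n] [DecidableEq n]

theorem exists_smul_unitary_of_conjTranspose_mul_self_eq_smul_one {M : Matrix n n ℂ} {c : ℂ}
    (h : Mᴴ * M = c • 1) : ∃ r : ℝ, ∃ V ∈ unitaryGroup n ℂ, M = (r : ℂ) • V := by
  by_cases hM : M = 0
  · exact ⟨0, 1, one_mem _, by simp [hM]⟩
  obtain ⟨p, -⟩ : ∃ p q, M q p ≠ 0 := by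
    by_contra! hzero
    exact hM (ext fun q p => hzero p q)
  have hc : 0 < c := by
    refine lt_of_le_of_ne ?_ fun hc => hM ?_
    · simpa [h] using (posSemidef_conjTranspose_mul_self M).diag_nonneg (i := p)
    · rwa [← hc, zero_smul, conjTranspose_mul_self_eq_zero] at h
  obtain ⟨a, ha, rfl⟩ := RCLike.pos_iff_exists_ofReal.mp hc
  have hr : (√a : ℂ) ≠ 0 := by exact_mod_cast (Real.sqrt_pos.mpr ha).ne'
  refine ⟨√a, (√a : ℂ)⁻¹ • M, ?_, by rw [smul_smul, mul_inv_cancel₀ hr, one_smul]⟩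
  rw [mem_unitaryGroup_iff', star_eq_conjTranspose, conjTranspose_smul, Matrix.smul_mul,
    Matrix.mul_smul, h, smul_smul, smul_smul]
  convert one_smul ℂ (1 : Matrix n n ℂ)
  rw [star_inv₀, Complex.star_def, Complex.conj_ofReal, ← mul_inv, ← Complex.ofReal_mul,
    Real.mul_self_sqrt ha.le]
  exact inv_mul_cancel₀ hc.ne'

theorem eq_smul_of_conjTranspose_mul_eq_smul_one {V W : Matrix n n ℂ} {μ : ℂ}
    (hV : V ∈ unitaryGroup n ℂ) (h : Vᴴ * W = μ • 1) : W = μ • V := by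
  rw [← Matrix.one_mul W, ← mem_unitaryGroup_iff.mp hV, star_eq_conjTranspose, Matrix.mul_assoc,
    h, Matrix.mul_smul, Matrix.mul_one]

theorem exists_unitary_of_conjTranspose_mul_eq_smul_one {ι : Type*} {W : ι → Matrix n n ℂ}
    (hW : ∀ i j, ∃ c : ℂ, (W i)ᴴ * W j = c • 1) :
    ∃ V ∈ unitaryGroup n ℂ, ∃ μ : ι → ℂ, ∀ i, W i = μ i • V := by
  by_cases hzero : ∀ i, W i = 0
  · exact ⟨1, one_mem _, 0, fun i => by simp [hzero i]⟩
  obtain ⟨i₀, hi₀⟩ := not_forall.mp hzero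
  choose c hc using hW
  obtain ⟨r, V, hV, hWV⟩ := exists_smul_unitary_of_conjTranspose_mul_self_eq_smul_one (hc i₀ i₀)
  have hr : (r : ℂ) ≠ 0 := fun h => hi₀ (by simp [hWV, h])
  refine ⟨V, hV, fun i => c i₀ i / r, fun i => eq_smul_of_conjTranspose_mul_eq_smul_one hV ?_⟩
  have hrV := hc i₀ i
  rw [hWV, conjTranspose_smul, Complex.star_def, Complex.conj_ofReal, Matrix.smul_mul] at hrV
  rw [← inv_smul_smul₀ hr (Vᴴ * W i), hrV, smul_smul, inv_mul_eq_div]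

theorem eq_one_of_smul_conj_isometry [Nonempty n] {V : Matrix n n ℂ} (hV : V ∈ unitaryGroup n ℂ)
    {s : ℝ} (hs : 0 ≤ s)
    (hiso : ∀ A B : Matrix n n ℂ,
      (((s : ℂ) • (V * A * Vᴴ))ᴴ * ((s : ℂ) • (V * B * Vᴴ))).trace = (Aᴴ * B).trace) :
    s = 1 := by
  have hVV : V * Vᴴ = 1 := mem_unitaryGroup_iff.mp hV
  have hn : (Fintype.card n : ℂ) ≠ 0 := Nat.cast_ne_zero.mpr Fintype.card_ne_zero
  have h11 := hiso 1 1
  rw [Matrix.mul_one, hVV] at h11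
  have hss : ((s * s : ℝ) : ℂ) * Fintype.card n = 1 * Fintype.card n := by
    simpa [Complex.conj_ofReal, smul_smul] using h11
  have : s * s = 1 := by exact_mod_cast mul_right_cancel₀ hn hss
  nlinarith

end Unitary

/-- A completely positive map Λ on M_d(ℂ) that is unitary for the Hilbert–Schmidt inner
product (Tr Λ(A)†Λ(B) = Tr A†B for all A, B) is conjugation by a unitary:
Λ(A) = U† A U for some unitary U. -/
theorem stmt18 {d : ℕ}
    (Λ : Matrix (Fin d) (Fin d) ℂ →ₗ[ℂ] Matrix (Fin d) (Fin d) ℂ)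
    (hCP : IsCPMap Λ)
    (hiso : ∀ A B : Matrix (Fin d) (Fin d) ℂ, ((Λ A)ᴴ * Λ B).trace = (Aᴴ * B).trace) :
    ∃ U : Matrix (Fin d) (Fin d) ℂ, U ∈ Matrix.unitaryGroup (Fin d) ℂ ∧
      ∀ A : Matrix (Fin d) (Fin d) ℂ, Λ A = Uᴴ * A * U := by
  rcases isEmpty_or_nonempty (Fin d) with _ | _
  · exact ⟨1, one_mem _, fun A => Subsingleton.elim _ _⟩
  obtain ⟨W, hW⟩ := hCP.exists_kraus
  have hscalar (i j) : ∃ c : ℂ, (W i)ᴴ * W j = c • 1 :=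
    exists_eq_smul_one_of_sum_conj_eq_self
      (sum_kraus_adjoint_comp_kraus_eq_self W (by simpa only [hW] using hiso)) (i, j)
  obtain ⟨V, hV, μ, hμ⟩ := exists_unitary_of_conjTranspose_mul_eq_smul_one hscalar
  set s : ℝ := ∑ i, Complex.normSq (μ i)
  have hΛ (A) : Λ A = (s : ℂ) • (V * A * Vᴴ) := by
    simp only [hW, hμ, sum_smul_mul_mul_smul_conjTranspose, s]
  have hs : s = 1 :=
    eq_one_of_smul_conj_isometry hV (Finset.sum_nonneg fun i _ => Complex.normSq_nonneg (μ i))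
      (by simpa only [hΛ] using hiso)
  refine ⟨Vᴴ, Unitary.star_mem hV, fun A => ?_⟩
  rw [hΛ, hs, conjTranspose_conjTranspose, Complex.ofReal_one, one_smul]
end
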